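/- Let Δ(λ) be the discriminant of x^5 + λ₄x³ + λ₆x² + λ₈x + λ₁₀ and let ℓ₆ = 10λ₁₀∂_{λ₄} - (4/5)λ₈λ₄∂_{λ₆} + (6λ₁₀λ₄ - (6/5)λ₈λ₆)∂_{λ₈} + (4λ₁₀λ₆ - (8/5)λ₈²)∂_{λ₁₀}. Then ℓ₆Δ = 4λ₆·Δ. -/

import Mathlib

/-- The discriminant of the quintic `x^5 + l4*x^3 + l6*x^2 + l8*x + l10`. -/
noncomputable def quinticDisc (l4 l6 l8 l10 : ℂ) : ℂ :=
  3125 * l10 ^ 4 - 3750 * l10 ^ 3 * l6 * l4 + 2000 * l10 ^ 2 * l8 ^ 2 * l4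
    + 2250 * l10 ^ 2 * l8 * l6 ^ 2 - 1600 * l10 * l8 ^ 3 * l6 + 256 * l8 ^ 5
    - 900 * l10 ^ 2 * l8 * l4 ^ 3 + 825 * l10 ^ 2 * l6 ^ 2 * l4 ^ 2
    + 560 * l10 * l8 ^ 2 * l6 * l4 ^ 2 - 630 * l10 * l8 * l6 ^ 3 * l4
    + 108 * l10 * l6 ^ 5 - 128 * l8 ^ 4 * l4 ^ 2 + 144 * l8 ^ 3 * l6 ^ 2 * l4
    - 27 * l8 ^ 2 * l6 ^ 4 + 108 * l10 ^ 2 * l4 ^ 5 - 72 * l10 * l8 * l6 * l4 ^ 4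
    + 16 * l10 * l6 ^ 3 * l4 ^ 3 + 16 * l8 ^ 3 * l4 ^ 4 - 4 * l8 ^ 2 * l6 ^ 2 * l4 ^ 3

section PartialDerivatives

variable (l4 l6 l8 l10 : ℂ)

theorem deriv_quinticDisc_l4 :
    deriv (fun t => quinticDisc t l6 l8 l10) l4 =
      -3750 * l10 ^ 3 * l6 + 2000 * l10 ^ 2 * l8 ^ 2 - 2700 * l10 ^ 2 * l8 * l4 ^ 2
        + 1650 * l10 ^ 2 * l6 ^ 2 * l4 + 1120 * l10 * l8 ^ 2 * l6 * l4 - 630 * l10 * l8 * l6 ^ 3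
        - 256 * l8 ^ 4 * l4 + 144 * l8 ^ 3 * l6 ^ 2 + 540 * l10 ^ 2 * l4 ^ 4
        - 288 * l10 * l8 * l6 * l4 ^ 3 + 48 * l10 * l6 ^ 3 * l4 ^ 2 + 64 * l8 ^ 3 * l4 ^ 3
        - 12 * l8 ^ 2 * l6 ^ 2 * l4 ^ 2 := by
  simp (disch := fun_prop) only [quinticDisc, deriv_fun_add, deriv_fun_sub, deriv_const_mul_field,
    deriv_fun_pow, deriv_id'', deriv_const, deriv_const_mul_id]
  ring

theorem deriv_quinticDisc_l6 :
    deriv (fun t => quinticDisc l4 t l8 l10) l6 =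
      -3750 * l10 ^ 3 * l4 + 4500 * l10 ^ 2 * l8 * l6 - 1600 * l10 * l8 ^ 3
        + 1650 * l10 ^ 2 * l6 * l4 ^ 2 + 560 * l10 * l8 ^ 2 * l4 ^ 2 - 1890 * l10 * l8 * l6 ^ 2 * l4
        + 540 * l10 * l6 ^ 4 + 288 * l8 ^ 3 * l6 * l4 - 108 * l8 ^ 2 * l6 ^ 3
        - 72 * l10 * l8 * l4 ^ 4 + 48 * l10 * l6 ^ 2 * l4 ^ 3 - 8 * l8 ^ 2 * l6 * l4 ^ 3 := by
  simp (disch := fun_prop) only [quinticDisc, deriv_fun_add, deriv_fun_sub, deriv_const_mul_field,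
    deriv_mul_const_field, deriv_fun_pow, deriv_id'', deriv_const, deriv_const_mul_id]
  ring

theorem deriv_quinticDisc_l8 :
    deriv (fun t => quinticDisc l4 l6 t l10) l8 =
      4000 * l10 ^ 2 * l8 * l4 + 2250 * l10 ^ 2 * l6 ^ 2 - 4800 * l10 * l8 ^ 2 * l6 + 1280 * l8 ^ 4
        - 900 * l10 ^ 2 * l4 ^ 3 + 1120 * l10 * l8 * l6 * l4 ^ 2 - 630 * l10 * l6 ^ 3 * l4
        - 512 * l8 ^ 3 * l4 ^ 2 + 432 * l8 ^ 2 * l6 ^ 2 * l4 - 54 * l8 * l6 ^ 4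
        - 72 * l10 * l6 * l4 ^ 4 + 48 * l8 ^ 2 * l4 ^ 4 - 8 * l8 * l6 ^ 2 * l4 ^ 3 := by
  simp (disch := fun_prop) only [quinticDisc, deriv_fun_add, deriv_fun_sub, deriv_const_mul_field,
    deriv_mul_const_field, deriv_fun_pow, deriv_id'', deriv_const, deriv_const_mul_id]
  ring

theorem deriv_quinticDisc_l10 :
    deriv (fun t => quinticDisc l4 l6 l8 t) l10 =
      12500 * l10 ^ 3 - 11250 * l10 ^ 2 * l6 * l4 + 4000 * l10 * l8 ^ 2 * l4
        + 4500 * l10 * l8 * l6 ^ 2 - 1600 * l8 ^ 3 * l6 - 1800 * l10 * l8 * l4 ^ 3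
        + 1650 * l10 * l6 ^ 2 * l4 ^ 2 + 560 * l8 ^ 2 * l6 * l4 ^ 2 - 630 * l8 * l6 ^ 3 * l4
        + 108 * l6 ^ 5 + 216 * l10 * l4 ^ 5 - 72 * l8 * l6 * l4 ^ 4 + 16 * l6 ^ 3 * l4 ^ 3 := by
  simp (disch := fun_prop) only [quinticDisc, deriv_fun_add, deriv_fun_sub, deriv_const_mul_field,
    deriv_mul_const_field, deriv_fun_pow, deriv_id'', deriv_const, deriv_const_mul_id]
  ring

end PartialDerivatives

/-- the Zakalyukin vector field
ℓ₆ = 10λ₁₀∂_{λ₄} - (4/5)λ₈λ₄∂_{λ₆} + (6λ₁₀λ₄ - (6/5)λ₈λ₆)∂_{λ₈}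
  + (4λ₁₀λ₆ - (8/5)λ₈²)∂_{λ₁₀} satisfies ℓ₆Δ = 4λ₆·Δ. -/
theorem ell6_on_disc (l4 l6 l8 l10 : ℂ) :
    10 * l10 * deriv (fun t => quinticDisc t l6 l8 l10) l4
      - 4 / 5 * l8 * l4 * deriv (fun t => quinticDisc l4 t l8 l10) l6
      + (6 * l10 * l4 - 6 / 5 * l8 * l6) * deriv (fun t => quinticDisc l4 l6 t l10) l8
      + (4 * l10 * l6 - 8 / 5 * l8 ^ 2) * deriv (fun t => quinticDisc l4 l6 l8 t) l10
    = 4 * l6 * quinticDisc l4 l6 l8 l10 := by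
  rw [deriv_quinticDisc_l4, deriv_quinticDisc_l6, deriv_quinticDisc_l8, deriv_quinticDisc_l10,
    quinticDisc]
  ring
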